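/- arXiv:quant-ph/0701237 — 4 statements merged into one kernel-verified Lean document; each statement's English description precedes it below -/
import Mathlib

section
/- Generalized Clausius principle: Let E₁, E₂ : ℝ → ℝ be differentiable on (0,∞) with continuous nonnegative derivatives E₁', E₂' there. Let temperatures satisfy 0 < T₁' < T₁ ≤ T₂ < T₂'. Define the energy transfers ΔE = ∫_{T₁'}^{T₁} E₁'(t) dt and ΔE' = ∫_{T₂}^{T₂'} E₂'(t) dt, and assume ΔE' ≤ ΔE. Then the total entropy change ΔH = −∫_{T₁'}^{T₁} E₁'(t)/t dt + ∫_{T₂}^{T₂'} E₂'(t)/t dt is nonpositive: ΔH ≤ 0. -/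
open MeasureTheory Set

/-- Generalized Clausius principle: transferring energy ΔE from a system at
effective temperature T₁ to a system at effective temperature T₂ ≥ T₁,
with ΔE' ≤ ΔE received, yields a nonpositive total entropy change. -/
theorem generalized_clausius_principle
    (E₁ E₂ E₁' E₂' : ℝ → ℝ)
    (hE₁ : ∀ t ∈ Ioi (0:ℝ), HasDerivAt E₁ (E₁' t) t)
    (hE₂ : ∀ t ∈ Ioi (0:ℝ), HasDerivAt E₂ (E₂' t) t)
    (hE₁'c : ContinuousOn E₁' (Ioi 0))
    (hE₂'c : ContinuousOn E₂' (Ioi 0))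
    (hE₁'nn : ∀ t ∈ Ioi (0:ℝ), 0 ≤ E₁' t)
    (hE₂'nn : ∀ t ∈ Ioi (0:ℝ), 0 ≤ E₂' t)
    (T₁' T₁ T₂ T₂' : ℝ)
    (h0 : 0 < T₁') (h1 : T₁' < T₁) (h12 : T₁ ≤ T₂) (h2 : T₂ < T₂')
    (ΔE ΔE' : ℝ)
    (hΔE : ΔE = ∫ t in T₁'..T₁, E₁' t)
    (hΔE' : ΔE' = ∫ t in T₂..T₂', E₂' t)
    (hle : ΔE' ≤ ΔE) :
    -(∫ t in T₁'..T₁, E₁' t / t) + (∫ t in T₂..T₂', E₂' t / t) ≤ 0 := by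
  have hT1 : (0:ℝ) < T₁ := h0.trans h1
  have hT2 : (0:ℝ) < T₂ := hT1.trans_le h12
  have hT2' : (0:ℝ) < T₂' := hT2.trans h2
  have hsub1 : uIcc T₁' T₁ ⊆ Ioi (0:ℝ) := by
    rw [uIcc_of_le h1.le]
    exact fun x hx => lt_of_lt_of_le h0 hx.1
  have hsub2 : uIcc T₂ T₂' ⊆ Ioi (0:ℝ) := by
    rw [uIcc_of_le h2.le]
    exact fun x hx => lt_of_lt_of_le hT2 hx.1
  have hi1 : IntervalIntegrable E₁' volume T₁' T₁ :=
    (hE₁'c.mono hsub1).intervalIntegrable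
  have hi2 : IntervalIntegrable E₂' volume T₂ T₂' :=
    (hE₂'c.mono hsub2).intervalIntegrable
  have hct : ContinuousOn (fun t : ℝ => t⁻¹) (Ioi 0) :=
    continuousOn_inv₀.mono (fun x hx => ne_of_gt hx)
  have hi1' : IntervalIntegrable (fun t => E₁' t / t) volume T₁' T₁ := by
    have : ContinuousOn (fun t => E₁' t / t) (uIcc T₁' T₁) := by
      exact ((hE₁'c.mono hsub1).div (continuousOn_id.mono hsub1)
        (fun x hx => ne_of_gt (hsub1 hx)))
    exact this.intervalIntegrable
  have hi2' : IntervalIntegrable (fun t => E₂' t / t) volume T₂ T₂' := by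
    have : ContinuousOn (fun t => E₂' t / t) (uIcc T₂ T₂') :=
      ((hE₂'c.mono hsub2).div (continuousOn_id.mono hsub2)
        (fun x hx => ne_of_gt (hsub2 hx)))
    exact this.intervalIntegrable
  -- ΔE ≥ 0
  have hΔEnn : 0 ≤ ΔE := by
    rw [hΔE]
    apply intervalIntegral.integral_nonneg h1.le
    intro u hu
    exact hE₁'nn u (lt_of_lt_of_le h0 hu.1)
  -- lower bound: ΔE / T₁ ≤ ∫ E₁'/t
  have hlow : ΔE / T₁ ≤ ∫ t in T₁'..T₁, E₁' t / t := by
    have : (∫ t in T₁'..T₁, E₁' t / T₁) ≤ ∫ t in T₁'..T₁, E₁' t / t := by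
      apply intervalIntegral.integral_mono_on h1.le (hi1.div_const T₁) hi1'
      intro x hx
      have hx0 : 0 < x := lt_of_lt_of_le h0 hx.1
      exact div_le_div_of_nonneg_left (hE₁'nn x hx0) hx0 hx.2
    calc ΔE / T₁ = ∫ t in T₁'..T₁, E₁' t / T₁ := by
          rw [hΔE, intervalIntegral.integral_div]
      _ ≤ _ := this
  -- upper bound: ∫ E₂'/t ≤ ΔE' / T₂
  have hup : (∫ t in T₂..T₂', E₂' t / t) ≤ ΔE' / T₂ := by
    have : (∫ t in T₂..T₂', E₂' t / t) ≤ ∫ t in T₂..T₂', E₂' t / T₂ := by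
      apply intervalIntegral.integral_mono_on h2.le hi2' (hi2.div_const T₂)
      intro x hx
      have hx0 : 0 < x := lt_of_lt_of_le hT2 hx.1
      exact div_le_div_of_nonneg_left (hE₂'nn x hx0) hT2 hx.1
    calc (∫ t in T₂..T₂', E₂' t / t) ≤ ∫ t in T₂..T₂', E₂' t / T₂ := this
      _ = ΔE' / T₂ := by rw [hΔE', intervalIntegral.integral_div]
  have chain : ΔE' / T₂ ≤ ΔE / T₁ := by
    calc ΔE' / T₂ ≤ ΔE / T₂ := div_le_div_of_nonneg_right hle hT2.le
      _ ≤ ΔE / T₁ := div_le_div_of_nonneg_left hΔEnn hT1 h12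
  linarith
end

section
/- Strict generalized Clausius principle: Let E₁, E₂ : ℝ → ℝ be differentiable on (0,∞) with continuous nonnegative derivatives E₁', E₂' there. Let 0 < T₁' < T₁ < T₂ < T₂' (strict inequality between T₁ and T₂). Define ΔE = ∫_{T₁'}^{T₁} E₁'(t) dt and ΔE' = ∫_{T₂}^{T₂'} E₂'(t) dt, and assume 0 < ΔE and ΔE' ≤ ΔE. Then the total entropy change ΔH = −∫_{T₁'}^{T₁} E₁'(t)/t dt + ∫_{T₂}^{T₂'} E₂'(t)/t dt is strictly negative: ΔH < 0. Hence such an energy transfer is impossible as the sole result of a physical process. -/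
open MeasureTheory Set

/-- Generalized Clausius principle: transferring energy ΔE from a system at
effective temperature T₁ to a system at effective temperature T₂ ≥ T₁,
with ΔE' ≤ ΔE received, yields a strictly negative total entropy change. -/
theorem strict_generalized_clausius_principle
    (E₁ E₂ E₁' E₂' : ℝ → ℝ)
    (hE₁ : ∀ t ∈ Ioi (0:ℝ), HasDerivAt E₁ (E₁' t) t)
    (hE₂ : ∀ t ∈ Ioi (0:ℝ), HasDerivAt E₂ (E₂' t) t)
    (hE₁'c : ContinuousOn E₁' (Ioi 0))
    (hE₂'c : ContinuousOn E₂' (Ioi 0))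
    (hE₁'nn : ∀ t ∈ Ioi (0:ℝ), 0 ≤ E₁' t)
    (hE₂'nn : ∀ t ∈ Ioi (0:ℝ), 0 ≤ E₂' t)
    (T₁' T₁ T₂ T₂' : ℝ)
    (h0 : 0 < T₁') (h1 : T₁' < T₁) (h12 : T₁ < T₂) (h2 : T₂ < T₂')
    (ΔE ΔE' : ℝ)
    (hΔE : ΔE = ∫ t in T₁'..T₁, E₁' t)
    (hΔE' : ΔE' = ∫ t in T₂..T₂', E₂' t)
    (hpos : 0 < ΔE) (hle : ΔE' ≤ ΔE) :
    -(∫ t in T₁'..T₁, E₁' t / t) + (∫ t in T₂..T₂', E₂' t / t) < 0 := by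
  have hT1pos : (0:ℝ) < T₁ := h0.trans h1
  have hT2pos : (0:ℝ) < T₂ := hT1pos.trans h12
  have hsub1 : Icc T₁' T₁ ⊆ Ioi (0:ℝ) := fun x hx => lt_of_lt_of_le h0 hx.1
  have hsub2 : Icc T₂ T₂' ⊆ Ioi (0:ℝ) := fun x hx => lt_of_lt_of_le hT2pos hx.1
  have huIcc1 : uIcc T₁' T₁ = Icc T₁' T₁ := uIcc_of_le h1.le
  have huIcc2 : uIcc T₂ T₂' = Icc T₂ T₂' := uIcc_of_le h2.le
  have hint1 : IntervalIntegrable E₁' MeasureTheory.volume T₁' T₁ := by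
    apply ContinuousOn.intervalIntegrable
    rw [huIcc1]; exact hE₁'c.mono hsub1
  have hint2 : IntervalIntegrable E₂' MeasureTheory.volume T₂ T₂' := by
    apply ContinuousOn.intervalIntegrable
    rw [huIcc2]; exact hE₂'c.mono hsub2
  have hint1' : IntervalIntegrable (fun t => E₁' t / t) MeasureTheory.volume T₁' T₁ := by
    apply ContinuousOn.intervalIntegrable
    rw [huIcc1]
    exact (hE₁'c.mono hsub1).div continuousOn_id
      (fun x hx => ne_of_gt (lt_of_lt_of_le h0 hx.1))
  have hint2' : IntervalIntegrable (fun t => E₂' t / t) MeasureTheory.volume T₂ T₂' := by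
    apply ContinuousOn.intervalIntegrable
    rw [huIcc2]
    exact (hE₂'c.mono hsub2).div continuousOn_id
      (fun x hx => ne_of_gt (lt_of_lt_of_le hT2pos hx.1))
  have hint1c : IntervalIntegrable (fun t => E₁' t / T₁) MeasureTheory.volume T₁' T₁ :=
    hint1.div_const _
  have hint2c : IntervalIntegrable (fun t => E₂' t / T₂) MeasureTheory.volume T₂ T₂' :=
    hint2.div_const _
  have hlow : ΔE / T₁ ≤ ∫ t in T₁'..T₁, E₁' t / t := by
    have hmono : (∫ t in T₁'..T₁, E₁' t / T₁) ≤ ∫ t in T₁'..T₁, E₁' t / t := by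
      apply intervalIntegral.integral_mono_on h1.le hint1c hint1'
      intro x hx
      have hx0 : 0 < x := lt_of_lt_of_le h0 hx.1
      gcongr
      · exact hE₁'nn x (hsub1 hx)
      · exact hx.2
    calc ΔE / T₁ = ∫ t in T₁'..T₁, E₁' t / T₁ := by
          rw [hΔE, intervalIntegral.integral_div]
      _ ≤ _ := hmono
  have hup : (∫ t in T₂..T₂', E₂' t / t) ≤ ΔE' / T₂ := by
    have hmono : (∫ t in T₂..T₂', E₂' t / t) ≤ ∫ t in T₂..T₂', E₂' t / T₂ := by
      apply intervalIntegral.integral_mono_on h2.le hint2' hint2c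
      intro x hx
      gcongr
      · exact hE₂'nn x (hsub2 hx)
      · exact hx.1
    calc (∫ t in T₂..T₂', E₂' t / t) ≤ ∫ t in T₂..T₂', E₂' t / T₂ := hmono
      _ = ΔE' / T₂ := by rw [hΔE', intervalIntegral.integral_div]
  have hstrict : ΔE / T₂ < ΔE / T₁ := by
    apply div_lt_div_of_pos_left hpos hT1pos h12
  have h1' : ΔE' / T₂ ≤ ΔE / T₂ := by gcongr
  linarith
end

section
/- Dissipated energy in the many-degrees-of-freedom model: Let a > 0, α > 0, k > 0, T > 0, b > 0 (b stands for hR/N). Define the partition function Z = 1 + ∫_0^∞ a·x^α·exp(−(b/(kT))·x) dx and the thermal energy E = Z⁻¹ · ∫_0^∞ a·x^{α+1}·b·exp(−(b/(kT))·x) dx. Then Z = 1 + a·Γ(α+1)·(kT/b)^{α+1} and E = (α+1)·k·T·(1 − 1/Z); that is, writing ε = 1 − 1/Z for the error probability, E = (α+1)·k·T·ε. -/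
open MeasureTheory Set Real

/-!
Both integrals are Gamma integrals: with `c = b/(kT)`,
`∫₀^∞ x^s e^{-cx} dx = Γ(s+1)/c^{s+1}`, which gives `Z` at once. Raising the exponent by one
multiplies the integral by `Γ(s+2)/(c·Γ(s+1)) = (s+1)/c`, so the energy integral equals
`(α+1)·kT·(Z - 1)`, and dividing by `Z` gives `E = (α+1)·kT·(1 - 1/Z)`.
-/

theorem integral_rpow_mul_exp_neg_mul_Ioi_eq_Gamma {s c : ℝ} (hs : -1 < s) (hc : 0 < c) :
    ∫ x in Ioi (0:ℝ), x ^ s * exp (-c * x) = Gamma (s + 1) * (1 / c) ^ (s + 1) := by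
  have h := integral_rpow_mul_exp_neg_mul_Ioi (a := s + 1) (by linarith) hc
  simp only [add_sub_cancel_right, ← neg_mul] at h
  rw [h, mul_comm]

theorem integral_rpow_mul_exp_neg_mul_Ioi_pos {s c : ℝ} (hs : -1 < s) (hc : 0 < c) :
    0 < ∫ x in Ioi (0:ℝ), x ^ s * exp (-c * x) := by
  rw [integral_rpow_mul_exp_neg_mul_Ioi_eq_Gamma hs hc]
  have := Gamma_pos_of_pos (show 0 < s + 1 by linarith)
  positivity

theorem integral_rpow_add_one_mul_exp_neg_mul_Ioi {s c : ℝ} (hs : -1 < s) (hc : 0 < c) :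
    ∫ x in Ioi (0:ℝ), x ^ (s + 1) * exp (-c * x)
      = (s + 1) / c * ∫ x in Ioi (0:ℝ), x ^ s * exp (-c * x) := by
  rw [integral_rpow_mul_exp_neg_mul_Ioi_eq_Gamma (by linarith) hc,
    integral_rpow_mul_exp_neg_mul_Ioi_eq_Gamma hs hc,
    Gamma_add_one (by linarith : s + 1 ≠ 0), rpow_add (by positivity), rpow_one]
  ring

/-- Dissipated energy in the many-degrees-of-freedom model: with level
density `w(x) = a·x^α` and `b = hR/N`, the partition function is
`Z = 1 + a·Γ(α+1)·(kT/b)^{α+1}` and the thermal energy is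
`E = (α+1)·k·T·(1 − 1/Z) = (α+1)·k·T·ε`. -/
theorem many_degrees_of_freedom_dissipation
    (a α k T b : ℝ) (ha : 0 < a) (hα : 0 < α) (hk : 0 < k)
    (hT : 0 < T) (hb : 0 < b)
    (Z E ε : ℝ)
    (hZ : Z = 1 + ∫ x in Ioi (0:ℝ), a * x ^ α * Real.exp (-(b / (k * T)) * x))
    (hE : E = Z⁻¹ * ∫ x in Ioi (0:ℝ),
      a * x ^ (α + 1) * b * Real.exp (-(b / (k * T)) * x))
    (hε : ε = 1 - 1 / Z) :
    Z = 1 + a * Real.Gamma (α + 1) * (k * T / b) ^ (α + 1) ∧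
    E = (α + 1) * k * T * (1 - 1 / Z) ∧
    E = (α + 1) * k * T * ε := by
  set c := b / (k * T) with hc_def
  have hc : 0 < c := by positivity
  have hα' : -1 < α := by linarith
  obtain ⟨J, hJ⟩ : ∃ J, ∫ x in Ioi (0:ℝ), x ^ α * exp (-c * x) = J := ⟨_, rfl⟩
  have hZJ : Z = 1 + a * J := by
    simp_rw [hZ, mul_assoc, integral_const_mul, hJ]
  have hEJ : E = Z⁻¹ * ((α + 1) * k * T * (a * J)) := by
    have hint : ∫ x in Ioi (0:ℝ), a * x ^ (α + 1) * b * exp (-c * x)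
        = a * b * ∫ x in Ioi (0:ℝ), x ^ (α + 1) * exp (-c * x) := by
      rw [← integral_const_mul]
      exact integral_congr_ae (ae_of_all _ fun x ↦ by ring)
    have hbc : b / c = k * T := by rw [hc_def]; field_simp
    rw [hE, hint, integral_rpow_add_one_mul_exp_neg_mul_Ioi hα' hc, hJ,
      mul_assoc (α + 1) k T, ← hbc]
    ring
  have hZ_ne : Z ≠ 0 := by
    have := integral_rpow_mul_exp_neg_mul_Ioi_pos hα' hc
    rw [hZJ, ← hJ]; positivity
  have hE_eq : E = (α + 1) * k * T * (1 - 1 / Z) := by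
    rw [hEJ, show a * J = Z - 1 by rw [hZJ]; ring]
    field_simp
  refine ⟨?_, hE_eq, hε ▸ hE_eq⟩
  rw [hZJ, ← hJ, integral_rpow_mul_exp_neg_mul_Ioi_eq_Gamma hα' hc, hc_def, one_div_div]
  ring
end

section
/- Closed form of the energy dissipation per step: Let a > 0, α > 0, k > 0, T > 0, h > 0, R > 0, N > 0. Define Z = 1 + a·Γ(α+1)·(N·k·T/(h·R))^{α+1} and ε = 1 − 1/Z. Then (α+1)·k·T·ε = ((α+1)·ε/N) · (ε/((1−ε)·a·Γ(α+1)))^{1/(α+1)} · h·R. In particular, for fixed error probability ε, degeneracy parameters a, α, and number of states N, the energy dissipation per computational step E(T) = (α+1)·k·T·ε is proportional to the rate of computation R, so the rate of heat production Q = R·E(T) is proportional to R². -/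
open Real

/-!
Inverting `ε = 1 − 1/Z` gives the odds `ε/(1−ε) = Z − 1 = a·Γ(α+1)·x^{α+1}` with `x = NkT/(hR)`,
so `(ε/((1−ε)·a·Γ(α+1)))^{1/(α+1)} = x`. Substituting `kT = x·hR/N` into `E(T) = (α+1)·k·T·ε`
expresses the energy per step as a multiple of `R`.
-/

theorem div_one_sub_eq_sub_one_of_eq_one_sub_inv {K : Type*} [Field K] {Z ε : K} (hZ : Z ≠ 0)
    (hε : ε = 1 - 1 / Z) : ε / (1 - ε) = Z - 1 := by
  subst hε
  field_simp
  ring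

theorem rpow_one_div_of_eq_one_sub_inv {A x p Z ε : ℝ} (hA : 0 < A) (hx : 0 ≤ x) (hp : p ≠ 0)
    (hZ : Z = 1 + A * x ^ p) (hε : ε = 1 - 1 / Z) : (ε / ((1 - ε) * A)) ^ (1 / p) = x := by
  have hZ_pos : 0 < Z := by rw [hZ]; positivity
  have h_odds : ε / (1 - ε) = A * x ^ p := by
    rw [div_one_sub_eq_sub_one_of_eq_one_sub_inv hZ_pos.ne' hε, hZ, add_sub_cancel_left]
  rw [← div_div, h_odds, mul_div_cancel_left₀ _ hA.ne', one_div, rpow_rpow_inv hx hp]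

/-- Closed form of the energy dissipation per step: with
`Z = 1 + a·Γ(α+1)·(NkT/(hR))^{α+1}` and `ε = 1 − 1/Z`, the dissipated
energy per step `E(T) = (α+1)·k·T·ε` equals
`((α+1)·ε/N)·(ε/((1−ε)·a·Γ(α+1)))^{1/(α+1)}·hR`, so that it is
proportional to the rate `R`, and the heat production rate
`Q = R·E(T)` is proportional to `R²`. -/
theorem energy_dissipation_closed_form
    (a α k T h R N : ℝ) (ha : 0 < a) (hα : 0 < α) (hk : 0 < k)
    (hT : 0 < T) (hh : 0 < h) (hR : 0 < R) (hN : 0 < N)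
    (Z ε : ℝ)
    (hZ : Z = 1 + a * Real.Gamma (α + 1) * (N * k * T / (h * R)) ^ (α + 1))
    (hε : ε = 1 - 1 / Z) :
    (α + 1) * k * T * ε
      = ((α + 1) * ε / N) *
        (ε / ((1 - ε) * a * Real.Gamma (α + 1))) ^ (1 / (α + 1)) * (h * R) ∧
    R * ((α + 1) * k * T * ε)
      = ((α + 1) * ε / N) *
        (ε / ((1 - ε) * a * Real.Gamma (α + 1))) ^ (1 / (α + 1)) * h * R ^ (2:ℝ) := by
  have hΓ : 0 < Real.Gamma (α + 1) := Real.Gamma_pos_of_pos (by linarith)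
  have h_root : (ε / ((1 - ε) * a * Real.Gamma (α + 1))) ^ (1 / (α + 1)) = N * k * T / (h * R) := by
    rw [mul_assoc]
    exact rpow_one_div_of_eq_one_sub_inv (by positivity) (by positivity) (by linarith) hZ hε
  have h_energy : (α + 1) * k * T * ε
      = ((α + 1) * ε / N) *
        (ε / ((1 - ε) * a * Real.Gamma (α + 1))) ^ (1 / (α + 1)) * (h * R) := by
    rw [h_root]
    field_simp
  refine ⟨h_energy, ?_⟩
  rw [h_energy, rpow_two]
  ring
end
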